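/- Let I be an instance of SPA-ST that admits at least one super-stable matching. Then I admits a super-stable matching M* (the student-optimal super-stable matching) such that for every super-stable matching M in I and every student s that is matched in M, the student s is also matched in M* and s does not strictly prefer M(s) to M*(s); moreover, every student unmatched in M* is unmatched in every super-stable matching of I. -/

import Mathlib

open scoped Classical

/-- An instance of the Student-Project Allocation problem with lecturer
preferences over students, with Ties (SPA-ST).  `sPref s p q` means student `s`
ranks project `p` at least as highly as project `q` (`p ⪰_s q`); `lPref k t t'`
means lecturer `k` ranks student `t` at least as highly as student `t'`. -/
structure SPAST (S P L : Type) [Fintype S] [Fintype P] [Fintype L]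
    [DecidableEq S] [DecidableEq P] [DecidableEq L] where
  /-- the lecturer offering each project -/
  lec : P → L
  /-- project capacities -/
  c : P → ℕ
  /-- lecturer capacities -/
  d : L → ℕ
  cpos : ∀ p : P, 0 < c p
  dpos : ∀ k : L, 0 < d k
  /-- the set of projects acceptable to each student -/
  acc : S → Finset P
  sPref : S → P → P → Prop
  lPref : L → S → S → Prop
  sRefl : ∀ s : S, ∀ p ∈ acc s, sPref s p p
  sTrans : ∀ s : S, ∀ p ∈ acc s, ∀ q ∈ acc s, ∀ r ∈ acc s,
    sPref s p q → sPref s q r → sPref s p r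
  sTotal : ∀ s : S, ∀ p ∈ acc s, ∀ q ∈ acc s, sPref s p q ∨ sPref s q p
  lRefl : ∀ k : L, ∀ t : S, (∃ p ∈ acc t, lec p = k) → lPref k t t
  lTrans : ∀ k : L, ∀ t1 t2 t3 : S,
    (∃ p ∈ acc t1, lec p = k) → (∃ p ∈ acc t2, lec p = k) → (∃ p ∈ acc t3, lec p = k) →
    lPref k t1 t2 → lPref k t2 t3 → lPref k t1 t3
  lTotal : ∀ k : L, ∀ t1 t2 : S,
    (∃ p ∈ acc t1, lec p = k) → (∃ p ∈ acc t2, lec p = k) →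
    lPref k t1 t2 ∨ lPref k t2 t1
  capLB : ∀ p : P, c p ≤ d (lec p)
  capUB : ∀ k : L, d k ≤ ∑ p ∈ Finset.univ.filter (fun p => lec p = k), c p

namespace SPAST

variable {S P L : Type} [Fintype S] [Fintype P] [Fintype L]
  [DecidableEq S] [DecidableEq P] [DecidableEq L]

/-- `M` is a matching: pairs are acceptable, each student is matched at most once,
and project and lecturer capacities are respected. -/
def IsMatching (I : SPAST S P L) (M : Finset (S × P)) : Prop :=
  (∀ x ∈ M, x.2 ∈ I.acc x.1) ∧
  (∀ s : S, ∀ p q : P, (s, p) ∈ M → (s, q) ∈ M → p = q) ∧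
  (∀ p : P, (M.filter (fun x => x.2 = p)).card ≤ I.c p) ∧
  (∀ k : L, (M.filter (fun x => I.lec x.2 = k)).card ≤ I.d k)

/-- The set `M(p)` of students assigned to project `p` in `M`. -/
def projAsg (M : Finset (S × P)) (p : P) : Finset S :=
  (M.filter (fun x => x.2 = p)).image Prod.fst

/-- The set `M(l_k)` of students assigned to lecturer `k` in `M`. -/
def lecAsg (I : SPAST S P L) (M : Finset (S × P)) (k : L) : Finset S :=
  (M.filter (fun x => I.lec x.2 = k)).image Prod.fst

/-- `t` is a least-preferred (worst) student of lecturer `k` in the set `T`. -/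
def WorstIn (I : SPAST S P L) (k : L) (T : Finset S) (t : S) : Prop :=
  t ∈ T ∧ ∀ t' ∈ T, I.lPref k t' t

/-- `(s, p)` is a super-blocking pair for `M`. -/
def SuperBlocking (I : SPAST S P L) (M : Finset (S × P)) (s : S) (p : P) : Prop :=
  p ∈ I.acc s ∧ (s, p) ∉ M ∧
  (∀ q : P, (s, q) ∈ M → ¬(I.sPref s q p ∧ ¬I.sPref s p q)) ∧
  (((projAsg M p).card < I.c p ∧ (lecAsg I M (I.lec p)).card < I.d (I.lec p)) ∨
   ((projAsg M p).card < I.c p ∧ (lecAsg I M (I.lec p)).card = I.d (I.lec p) ∧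
     (s ∈ lecAsg I M (I.lec p) ∨
      ∃ t : S, WorstIn I (I.lec p) (lecAsg I M (I.lec p)) t ∧ I.lPref (I.lec p) s t)) ∨
   ((projAsg M p).card = I.c p ∧
     ∃ t : S, WorstIn I (I.lec p) (projAsg M p) t ∧ I.lPref (I.lec p) s t))

/-- `(s, p)` is a weakly-blocking pair for `M`. -/
def WeakBlocking (I : SPAST S P L) (M : Finset (S × P)) (s : S) (p : P) : Prop :=
  p ∈ I.acc s ∧ (s, p) ∉ M ∧
  (∀ q : P, (s, q) ∈ M → I.sPref s p q ∧ ¬I.sPref s q p) ∧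
  (((projAsg M p).card < I.c p ∧ (lecAsg I M (I.lec p)).card < I.d (I.lec p)) ∨
   ((projAsg M p).card < I.c p ∧ (lecAsg I M (I.lec p)).card = I.d (I.lec p) ∧
     (s ∈ lecAsg I M (I.lec p) ∨
      ∃ t : S, WorstIn I (I.lec p) (lecAsg I M (I.lec p)) t ∧
        (I.lPref (I.lec p) s t ∧ ¬I.lPref (I.lec p) t s))) ∨
   ((projAsg M p).card = I.c p ∧
     ∃ t : S, WorstIn I (I.lec p) (projAsg M p) t ∧
       (I.lPref (I.lec p) s t ∧ ¬I.lPref (I.lec p) t s)))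

/-- `M` is a super-stable matching in `I`. -/
def SuperStable (I : SPAST S P L) (M : Finset (S × P)) : Prop :=
  I.IsMatching M ∧ ∀ (s : S) (p : P), ¬SuperBlocking I M s p

/-- `M` is a weakly stable matching in `I`. -/
def WeaklyStable (I : SPAST S P L) (M : Finset (S × P)) : Prop :=
  I.IsMatching M ∧ ∀ (s : S) (p : P), ¬WeakBlocking I M s p

/-- `I` is an SPA-S instance: all preference lists are strictly ordered
(the preorders are antisymmetric). -/
def StrictPrefs (I : SPAST S P L) : Prop :=
  (∀ s : S, ∀ p ∈ I.acc s, ∀ q ∈ I.acc s, I.sPref s p q → I.sPref s q p → p = q) ∧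
  (∀ k : L, ∀ t t' : S, (∃ p ∈ I.acc t, I.lec p = k) → (∃ p ∈ I.acc t', I.lec p = k) →
    I.lPref k t t' → I.lPref k t' t → t = t')

/-- `I'` is an SPA-S instance obtained from `I` by breaking the ties. -/
def TieBreaking (I I' : SPAST S P L) : Prop :=
  I'.lec = I.lec ∧ I'.c = I.c ∧ I'.d = I.d ∧ I'.acc = I.acc ∧
  StrictPrefs I' ∧
  (∀ (s : S) (p q : P), I.sPref s p q → ¬I.sPref s q p →
    I'.sPref s p q ∧ ¬I'.sPref s q p) ∧
  (∀ (k : L) (t t' : S), I.lPref k t t' → ¬I.lPref k t' t →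
    I'.lPref k t t' ∧ ¬I'.lPref k t' t)

end SPAST

/-!
Given two super-stable matchings `M₁` and `M₂`, let every student keep a best one of her two
projects (ties broken in favour of `M₁`). A student who enters a project `p` this way was
rejected by `p` in the matching she did not come from, so a lecturer cannot gain students
relative to `M₁` at one project and relative to `M₂` at another. Counting students then shows
that each lecturer has as many students in the new assignment as in `M₁` and in `M₂`, that the
new assignment is a matching, and that a super-blocking pair for it would be rejected in both
`M₁` and `M₂` in incompatible ways. Hence super-stable matchings are directed under the
student-wise preference, and a finite directed family has an upper bound.
-/

namespace SPAST

variable {S P L : Type} [Fintype S] [Fintype P] [Fintype L]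
  [DecidableEq S] [DecidableEq P] [DecidableEq L]

section Preferences

variable (I : SPAST S P L)

def StrictSPref (s : S) (p q : P) : Prop := I.sPref s p q ∧ ¬I.sPref s q p

def StrictLPref (k : L) (t u : S) : Prop := I.lPref k t u ∧ ¬I.lPref k u t

def IsApplicant (k : L) (t : S) : Prop := ∃ p ∈ I.acc t, I.lec p = k

variable {I}

lemma StrictSPref.asymm {s : S} {p q : P} (h : StrictSPref I s p q) :
    ¬StrictSPref I s q p :=
  fun h' => h.2 h'.1

lemma StrictLPref.asymm {k : L} {t u : S} (h : StrictLPref I k t u) :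
    ¬StrictLPref I k u t :=
  fun h' => h.2 h'.1

lemma sPref_of_not_strictSPref {s : S} {p q : P} (hp : p ∈ I.acc s) (hq : q ∈ I.acc s)
    (h : ¬StrictSPref I s p q) : I.sPref s q p :=
  (I.sTotal s p hp q hq).elim (fun hpq => not_not.1 fun hqp => h ⟨hpq, hqp⟩) id

lemma lPref_of_not_strictLPref {k : L} {t u : S} (ht : IsApplicant I k t)
    (hu : IsApplicant I k u) (h : ¬StrictLPref I k t u) : I.lPref k u t :=
  (I.lTotal k t u ht hu).elim (fun htu => not_not.1 fun hut => h ⟨htu, hut⟩) id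

lemma not_strictSPref_trans {s : S} {a b c : P} (ha : a ∈ I.acc s) (hb : b ∈ I.acc s)
    (hc : c ∈ I.acc s) (hab : ¬StrictSPref I s a b) (hbc : ¬StrictSPref I s b c) :
    ¬StrictSPref I s a c := by
  intro hac
  have hba := sPref_of_not_strictSPref ha hb hab
  exact hbc ⟨I.sTrans s b hb a ha c hc hba hac.1,
    fun hcb => hac.2 (I.sTrans s c hc b hb a ha hcb hba)⟩

lemma exists_worstIn {k : L} {T : Finset S} (hT : T.Nonempty)
    (hA : ∀ t ∈ T, IsApplicant I k t) : ∃ w, I.WorstIn k T w := by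
  induction T using Finset.induction_on with
  | empty => simp at hT
  | insert a T _ ih =>
    have hAa := hA a (Finset.mem_insert_self a T)
    rcases T.eq_empty_or_nonempty with rfl | hT'
    · exact ⟨a, Finset.mem_insert_self a ∅, by simpa using I.lRefl k a hAa⟩
    obtain ⟨w, hwT, hw⟩ := ih hT' fun t ht => hA t (Finset.mem_insert_of_mem ht)
    have hAw := hA w (Finset.mem_insert_of_mem hwT)
    rcases I.lTotal k a w hAa hAw with haw | hwa
    · exact ⟨w, Finset.mem_insert_of_mem hwT,
        Finset.forall_mem_insert _ _ _ |>.2 ⟨haw, hw⟩⟩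
    · refine ⟨a, Finset.mem_insert_self a T, Finset.forall_mem_insert _ _ _ |>.2
        ⟨I.lRefl k a hAa, fun t ht => ?_⟩⟩
      exact I.lTrans k t w a (hA t (Finset.mem_insert_of_mem ht)) hAw hAa (hw t ht) hwa

lemma forall_strictLPref_of_not_exists_worstIn {k : L} {T : Finset S} {s : S}
    (hT : ∀ t ∈ T, IsApplicant I k t) (hs : IsApplicant I k s)
    (h : ¬∃ w, I.WorstIn k T w ∧ I.lPref k s w) : ∀ t ∈ T, StrictLPref I k t s := by
  intro t ht
  by_contra hts
  have hst := lPref_of_not_strictLPref (hT t ht) hs hts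
  obtain ⟨w, hwT, hw⟩ := exists_worstIn ⟨t, ht⟩ hT
  exact h ⟨w, ⟨hwT, hw⟩, I.lTrans k s t w hs (hT t ht) (hT w hwT) hst (hw t ht)⟩

end Preferences

section Assignments

section

variable {S P : Type} {M : Finset (S × P)}

lemma injOn_fst (hM : ∀ s p q, (s, p) ∈ M → (s, q) ∈ M → p = q) :
    Set.InjOn Prod.fst (M : Set (S × P)) := by
  rintro ⟨s, p⟩ hp ⟨s', q⟩ hq (rfl : s = s')
  rw [hM s p q hp hq]

variable [DecidableEq S] [DecidableEq P]

lemma mem_projAsg {s : S} {p : P} : s ∈ projAsg M p ↔ (s, p) ∈ M := by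
  simp [projAsg]

lemma card_projAsg (p : P) : (projAsg M p).card = (M.filter (fun x => x.2 = p)).card := by
  refine Finset.card_image_of_injOn fun x hx y hy hxy => Prod.ext hxy ?_
  simp only [Finset.coe_filter, Set.mem_ofPred_eq] at hx hy
  rw [hx.2, hy.2]

end

variable {I : SPAST S P L} {M : Finset (S × P)}

lemma mem_lecAsg {s : S} {k : L} : s ∈ lecAsg I M k ↔ ∃ p, (s, p) ∈ M ∧ I.lec p = k := by
  simp [lecAsg]

lemma mem_lecAsg_of_mem {s : S} {p : P} (h : (s, p) ∈ M) : s ∈ lecAsg I M (I.lec p) :=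
  mem_lecAsg.2 ⟨p, h, rfl⟩

lemma mem_lecAsg_of_mem_projAsg {s : S} {p : P} (h : s ∈ projAsg M p) :
    s ∈ lecAsg I M (I.lec p) :=
  mem_lecAsg_of_mem (mem_projAsg.1 h)

lemma card_lecAsg (hM : ∀ s p q, (s, p) ∈ M → (s, q) ∈ M → p = q) (k : L) :
    (lecAsg I M k).card = (M.filter (fun x => I.lec x.2 = k)).card :=
  Finset.card_image_of_injOn ((injOn_fst hM).mono (Finset.coe_subset.2 (Finset.filter_subset _ _)))

lemma card_lecAsg_eq_sum (hM : ∀ s p q, (s, p) ∈ M → (s, q) ∈ M → p = q) (k : L) :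
    (lecAsg I M k).card =
      ∑ p ∈ Finset.univ.filter (fun p => I.lec p = k), (projAsg M p).card := by
  rw [card_lecAsg hM, Finset.card_eq_sum_card_fiberwise (f := Prod.snd)
    (t := Finset.univ.filter (fun p => I.lec p = k))
    fun x hx => Finset.mem_filter.2 ⟨Finset.mem_univ _, (Finset.mem_filter.1 hx).2⟩]
  refine Finset.sum_congr rfl fun p hp => ?_
  rw [card_projAsg, Finset.filter_filter]
  congr 1
  refine Finset.filter_congr fun x _ => ?_
  simp only [Finset.mem_filter, Finset.mem_univ, true_and] at hp
  exact ⟨And.right, fun hx => ⟨hx ▸ hp, hx⟩⟩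

lemma card_eq_sum_card_lecAsg (hM : ∀ s p q, (s, p) ∈ M → (s, q) ∈ M → p = q) :
    M.card = ∑ k, (lecAsg I M k).card := by
  simp only [card_lecAsg hM]
  exact Finset.card_eq_sum_card_fiberwise (f := fun x : S × P => I.lec x.2)
    fun _ _ => Finset.mem_univ _

namespace IsMatching

lemma mem_acc (hM : I.IsMatching M) {s : S} {p : P} (h : (s, p) ∈ M) : p ∈ I.acc s :=
  hM.1 _ h

lemma eq_of_mem (hM : I.IsMatching M) {s : S} {p q : P} (hp : (s, p) ∈ M)
    (hq : (s, q) ∈ M) : p = q :=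
  hM.2.1 s p q hp hq

lemma isApplicant_of_mem_lecAsg (hM : I.IsMatching M) {k : L} {t : S}
    (h : t ∈ lecAsg I M k) : IsApplicant I k t :=
  let ⟨p, hp, hpk⟩ := mem_lecAsg.1 h
  ⟨p, hM.mem_acc hp, hpk⟩

lemma card_projAsg_le (hM : I.IsMatching M) (p : P) : (projAsg M p).card ≤ I.c p :=
  (card_projAsg (M := M) p).trans_le (hM.2.2.1 p)

lemma card_lecAsg_le (hM : I.IsMatching M) (k : L) : (lecAsg I M k).card ≤ I.d k :=
  (card_lecAsg hM.2.1 k).trans_le (hM.2.2.2 k)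

end IsMatching

end Assignments

section Rejection

variable (I : SPAST S P L)

def Rejects (M : Finset (S × P)) (s : S) (p : P) : Prop :=
  (∀ t ∈ projAsg M p, StrictLPref I (I.lec p) t s) ∧
    ((projAsg M p).card = I.c p ∨
      (lecAsg I M (I.lec p)).card = I.d (I.lec p) ∧
        ∀ t ∈ lecAsg I M (I.lec p), StrictLPref I (I.lec p) t s)

variable {I}

/-- Super-stability, read contrapositively: a student who would not mind `p` was turned down. -/
lemma SuperStable.rejects {M : Finset (S × P)} (hM : I.SuperStable M) {s : S} {p : P}
    (hacc : p ∈ I.acc s) (hsp : (s, p) ∉ M)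
    (hs : ∀ q, (s, q) ∈ M → ¬StrictSPref I s q p) :
    Rejects I M s p := by
  have hblock := hM.2 s p
  have hsA : IsApplicant I (I.lec p) s := ⟨p, hacc, rfl⟩
  have hlecA := fun t (ht : t ∈ lecAsg I M (I.lec p)) => hM.1.isApplicant_of_mem_lecAsg ht
  rcases (hM.1.card_projAsg_le p).eq_or_lt with hfull | hpc
  · refine ⟨forall_strictLPref_of_not_exists_worstIn
      (fun t ht => hlecA t (mem_lecAsg_of_mem_projAsg ht)) hsA fun hw => ?_, Or.inl hfull⟩
    exact hblock ⟨hacc, hsp, hs, Or.inr (Or.inr ⟨hfull, hw⟩)⟩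
  rcases (hM.1.card_lecAsg_le (I.lec p)).eq_or_lt with hkfull | hkc
  · have hall := forall_strictLPref_of_not_exists_worstIn hlecA hsA fun hw =>
      hblock ⟨hacc, hsp, hs, Or.inr (Or.inl ⟨hpc, hkfull, Or.inr hw⟩)⟩
    exact ⟨fun t ht => hall t (mem_lecAsg_of_mem_projAsg ht), Or.inr ⟨hkfull, hall⟩⟩
  · exact absurd ⟨hacc, hsp, hs, Or.inl ⟨hpc, hkc⟩⟩ hblock

end Rejection

section Domination

variable (I : SPAST S P L)

def Dominates (M' M : Finset (S × P)) : Prop :=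
  ∀ s p, (s, p) ∈ M → ∃ p', (s, p') ∈ M' ∧ ¬StrictSPref I s p p'

structure IsBestSelection (J N : Finset (S × P)) : Prop where
  subset : J ⊆ N
  eq_of_mem : ∀ s p q, (s, p) ∈ J → (s, q) ∈ J → p = q
  exists_mem : ∀ x ∈ N, ∃ q, (x.1, q) ∈ J
  not_strictSPref : ∀ s p q, (s, p) ∈ J → (s, q) ∈ N → ¬StrictSPref I s q p

variable {I}

lemma Dominates.trans {A B C : Finset (S × P)} (hA : ∀ x ∈ A, x.2 ∈ I.acc x.1)
    (hB : ∀ x ∈ B, x.2 ∈ I.acc x.1) (hC : ∀ x ∈ C, x.2 ∈ I.acc x.1)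
    (hBA : Dominates I B A) (hCB : Dominates I C B) : Dominates I C A := by
  intro s p hp
  obtain ⟨q, hq, hpq⟩ := hBA s p hp
  obtain ⟨r, hr, hqr⟩ := hCB s q hq
  exact ⟨r, hr, not_strictSPref_trans (hA _ hp) (hB _ hq) (hC _ hr) hpq hqr⟩

lemma IsBestSelection.dominates {J N M : Finset (S × P)} (hJ : IsBestSelection I J N)
    (hM : M ⊆ N) : Dominates I J M := by
  intro s p hp
  obtain ⟨q, hq⟩ := hJ.exists_mem (s, p) (hM hp)
  exact ⟨q, hq, hJ.not_strictSPref s q p hq (hM hp)⟩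

lemma IsBestSelection.union_comm {J M₁ M₂ : Finset (S × P)}
    (hJ : IsBestSelection I J (M₁ ∪ M₂)) : IsBestSelection I J (M₂ ∪ M₁) :=
  Finset.union_comm M₁ M₂ ▸ hJ

lemma exists_isBestSelection_union {M₁ M₂ : Finset (S × P)} (h₁ : I.IsMatching M₁)
    (h₂ : I.IsMatching M₂) : ∃ J, IsBestSelection I J (M₁ ∪ M₂) := by
  refine ⟨M₁.filter (fun x => ∀ q, (x.1, q) ∈ M₂ → ¬StrictSPref I x.1 q x.2) ∪
    M₂.filter (fun x => ∀ q, (x.1, q) ∈ M₁ → StrictSPref I x.1 x.2 q),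
    ⟨Finset.union_subset_union (Finset.filter_subset _ _) (Finset.filter_subset _ _),
      ?_, ?_, ?_⟩⟩
  · intro s p q hp hq
    simp only [Finset.mem_union, Finset.mem_filter] at hp hq
    rcases hp with ⟨hp, hp'⟩ | ⟨hp, hp'⟩ <;> rcases hq with ⟨hq, hq'⟩ | ⟨hq, hq'⟩
    · exact h₁.eq_of_mem hp hq
    · exact absurd (hq' p hp) (hp' q hq)
    · exact absurd (hp' q hq) (hq' p hp)
    · exact h₂.eq_of_mem hp hq
  · rintro ⟨s, p⟩ hp
    simp only [Finset.mem_union, Finset.mem_filter]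
    by_cases hr : ∃ r, (s, r) ∈ M₁
    · obtain ⟨r, hr⟩ := hr
      by_cases hbetter : ∃ q, (s, q) ∈ M₂ ∧ StrictSPref I s q r
      · obtain ⟨q, hq, hqr⟩ := hbetter
        exact ⟨q, Or.inr ⟨hq, fun r' hr' => h₁.eq_of_mem hr hr' ▸ hqr⟩⟩
      · exact ⟨r, Or.inl ⟨hr, fun q hq hqr => hbetter ⟨q, hq, hqr⟩⟩⟩
    · have hp₂ : (s, p) ∈ M₂ := (Finset.mem_union.1 hp).resolve_left fun h => hr ⟨p, h⟩
      exact ⟨p, Or.inr ⟨hp₂, fun q hq => absurd ⟨q, hq⟩ hr⟩⟩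
  · intro s p q hp hq
    simp only [Finset.mem_union, Finset.mem_filter] at hp hq
    rcases hp with ⟨hp, hp'⟩ | ⟨hp, hp'⟩ <;> rcases hq with hq | hq
    · rw [h₁.eq_of_mem hp hq]
      exact fun h => h.2 h.1
    · exact hp' q hq
    · exact (hp' q hq).asymm
    · rw [h₂.eq_of_mem hp hq]
      exact fun h => h.2 h.1

end Domination

namespace IsBestSelection

variable {I : SPAST S P L} {M₁ M₂ J : Finset (S × P)}

lemma mem_right_of_notMem_left (hJ : IsBestSelection I J (M₁ ∪ M₂)) {x : S × P}
    (hx : x ∈ J) (hx₁ : x ∉ M₁) : x ∈ M₂ :=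
  (Finset.mem_union.1 (hJ.subset hx)).resolve_left hx₁

lemma mem_acc_union (h₁ : I.IsMatching M₁) (h₂ : I.IsMatching M₂) {s : S} {p : P}
    (h : (s, p) ∈ M₁ ∪ M₂) : p ∈ I.acc s :=
  (Finset.mem_union.1 h).elim h₁.mem_acc h₂.mem_acc

lemma rejects_of_notMem_left (hJ : IsBestSelection I J (M₁ ∪ M₂)) (h₁ : I.SuperStable M₁)
    (h₂ : I.IsMatching M₂) {s : S} {p : P} (hJsp : (s, p) ∈ J) (hsp : (s, p) ∉ M₁) :
    Rejects I M₁ s p :=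
  h₁.rejects (h₂.mem_acc (hJ.mem_right_of_notMem_left hJsp hsp)) hsp
    fun q hq => hJ.not_strictSPref s p q hJsp (Finset.mem_union_left _ hq)

lemma card_left_le (hJ : IsBestSelection I J (M₁ ∪ M₂)) (h₁ : I.IsMatching M₁) :
    M₁.card ≤ J.card := by
  rw [← Finset.card_image_of_injOn (injOn_fst h₁.2.1),
    ← Finset.card_image_of_injOn (injOn_fst hJ.eq_of_mem)]
  refine Finset.card_le_card fun s hs => ?_
  obtain ⟨⟨s, p⟩, hp, rfl⟩ := Finset.mem_image.1 hs
  obtain ⟨q, hq⟩ := hJ.exists_mem (s, p) (Finset.mem_union_left _ hp)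
  exact Finset.mem_image.2 ⟨_, hq, rfl⟩

variable (hJ : IsBestSelection I J (M₁ ∪ M₂)) (h₁ : I.SuperStable M₁)
  (h₂ : I.SuperStable M₂)
include hJ h₁ h₂

lemma card_projAsg_le (p : P) : (projAsg J p).card ≤ I.c p := by
  by_contra! hc
  obtain ⟨x, hxJ, hx₁⟩ :=
    Finset.exists_mem_notMem_of_card_lt_card ((h₁.1.card_projAsg_le p).trans_lt hc)
  obtain ⟨y, hyJ, hy₂⟩ :=
    Finset.exists_mem_notMem_of_card_lt_card ((h₂.1.card_projAsg_le p).trans_lt hc)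
  rw [mem_projAsg] at hxJ hx₁ hyJ hy₂
  have hx₂ := hJ.mem_right_of_notMem_left hxJ hx₁
  have hy₁ := hJ.union_comm.mem_right_of_notMem_left hyJ hy₂
  exact ((hJ.rejects_of_notMem_left h₁ h₂.1 hxJ hx₁).1 y (mem_projAsg.2 hy₁)).asymm
    ((hJ.union_comm.rejects_of_notMem_left h₂ h₁.1 hyJ hy₂).1 x (mem_projAsg.2 hx₂))

lemma exists_rejected_of_card_lt {p : P} (h : (projAsg M₁ p).card < (projAsg J p).card) :
    (lecAsg I M₁ (I.lec p)).card = I.d (I.lec p) ∧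
      ∃ x ∈ lecAsg I M₂ (I.lec p),
        ∀ t ∈ lecAsg I M₁ (I.lec p), StrictLPref I (I.lec p) t x := by
  obtain ⟨x, hxJ, hx₁⟩ := Finset.exists_mem_notMem_of_card_lt_card h
  rw [mem_projAsg] at hxJ hx₁
  rcases (hJ.rejects_of_notMem_left h₁ h₂.1 hxJ hx₁).2 with hfull | ⟨hkfull, hall⟩
  · exact absurd (hJ.card_projAsg_le h₁ h₂ p) (hfull ▸ h).not_ge
  · exact ⟨hkfull, x, mem_lecAsg_of_mem (hJ.mem_right_of_notMem_left hxJ hx₁), hall⟩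

/-- A lecturer cannot gain students relative to `M₁` at one project and relative to `M₂` at
another. -/
lemma card_projAsg_le_right_of_lt {p q : P} (hpq : I.lec p = I.lec q)
    (h : (projAsg M₁ p).card < (projAsg J p).card) :
    (projAsg J q).card ≤ (projAsg M₂ q).card := by
  by_contra! h'
  obtain ⟨-, x, hx₂, hx⟩ := hJ.exists_rejected_of_card_lt h₁ h₂ h
  obtain ⟨-, y, hy₁, hy⟩ := hJ.union_comm.exists_rejected_of_card_lt h₂ h₁ h'
  rw [← hpq] at hy₁ hy
  exact (hx y hy₁).asymm (hy x hx₂)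

lemma card_lecAsg_le_left (k : L) : (lecAsg I J k).card ≤ (lecAsg I M₁ k).card := by
  by_cases hgain : ∃ p, I.lec p = k ∧ (projAsg M₁ p).card < (projAsg J p).card
  · obtain ⟨p, rfl, hp⟩ := hgain
    calc (lecAsg I J (I.lec p)).card
        ≤ (lecAsg I M₂ (I.lec p)).card := by
          rw [card_lecAsg_eq_sum hJ.eq_of_mem, card_lecAsg_eq_sum h₂.1.2.1]
          exact Finset.sum_le_sum fun q hq =>
            hJ.card_projAsg_le_right_of_lt h₁ h₂ (Finset.mem_filter.1 hq).2.symm hp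
      _ ≤ I.d (I.lec p) := h₂.1.card_lecAsg_le _
      _ = (lecAsg I M₁ (I.lec p)).card := (hJ.exists_rejected_of_card_lt h₁ h₂ hp).1.symm
  · push Not at hgain
    rw [card_lecAsg_eq_sum hJ.eq_of_mem, card_lecAsg_eq_sum h₁.1.2.1]
    exact Finset.sum_le_sum fun q hq => hgain q (Finset.mem_filter.1 hq).2

/-- Every student of `M₁` stays matched in `J`, so the inequalities of `card_lecAsg_le_left`
are equalities. -/
lemma card_lecAsg_eq_left (k : L) : (lecAsg I J k).card = (lecAsg I M₁ k).card := by
  have hle := fun k (_ : k ∈ Finset.univ) => hJ.card_lecAsg_le_left h₁ h₂ k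
  refine (Finset.sum_eq_sum_iff_of_le hle).1 (le_antisymm (Finset.sum_le_sum hle) ?_) k
    (Finset.mem_univ k)
  rw [← card_eq_sum_card_lecAsg hJ.eq_of_mem, ← card_eq_sum_card_lecAsg h₁.1.2.1]
  exact hJ.card_left_le h₁.1

lemma exists_card_lt_of_card_lt {p : P} (h : (projAsg J p).card < (projAsg M₁ p).card) :
    ∃ q, I.lec q = I.lec p ∧ (projAsg M₁ q).card < (projAsg J q).card := by
  by_contra! hle
  have hk := hJ.card_lecAsg_eq_left h₁ h₂ (I.lec p)
  rw [card_lecAsg_eq_sum hJ.eq_of_mem, card_lecAsg_eq_sum h₁.1.2.1] at hk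
  exact hk.not_lt (Finset.sum_lt_sum (fun q hq => hle q (Finset.mem_filter.1 hq).2)
    ⟨p, Finset.mem_filter.2 ⟨Finset.mem_univ p, rfl⟩, h⟩)

lemma exists_rejected_of_card_lt_left {p : P}
    (h : (projAsg J p).card < (projAsg M₁ p).card) :
    ∃ x ∈ lecAsg I M₂ (I.lec p),
      ∀ t ∈ lecAsg I M₁ (I.lec p), StrictLPref I (I.lec p) t x := by
  obtain ⟨q, hqp, hq⟩ := hJ.exists_card_lt_of_card_lt h₁ h₂ h
  rw [← hqp]
  exact (hJ.exists_rejected_of_card_lt h₁ h₂ hq).2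

lemma not_card_lt_right_of_card_lt_left {p : P}
    (h : (projAsg J p).card < (projAsg M₁ p).card) :
    ¬(projAsg J p).card < (projAsg M₂ p).card := by
  intro h'
  obtain ⟨q, hqp, hq⟩ := hJ.exists_card_lt_of_card_lt h₁ h₂ h
  obtain ⟨q', hq'p, hq'⟩ := hJ.union_comm.exists_card_lt_of_card_lt h₂ h₁ h'
  exact (hJ.card_projAsg_le_right_of_lt h₁ h₂ (hqp.trans hq'p.symm) hq).not_gt hq'

lemma isMatching : I.IsMatching J :=
  ⟨fun _ hx => mem_acc_union h₁.1 h₂.1 (hJ.subset hx), hJ.eq_of_mem,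
    fun p => (card_projAsg p).symm.trans_le (hJ.card_projAsg_le h₁ h₂ p),
    fun k => (card_lecAsg hJ.eq_of_mem k).symm.trans_le
      ((hJ.card_lecAsg_le_left h₁ h₂ k).trans (h₁.1.card_lecAsg_le k))⟩

lemma strictSPref_of_mem_left {s : S} {p q : P} (hsp : (s, p) ∈ M₁) (hspJ : (s, p) ∉ J)
    (hsq : (s, q) ∈ J) : StrictSPref I s q p := by
  by_contra hqp
  have hq₂ : (s, q) ∈ M₂ :=
    hJ.mem_right_of_notMem_left hsq fun hq₁ => hspJ (h₁.1.eq_of_mem hq₁ hsp ▸ hsq)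
  have hp₂ : (s, p) ∉ M₂ := fun hp₂ => hspJ (h₂.1.eq_of_mem hq₂ hp₂ ▸ hsq)
  have hR := h₂.rejects (h₁.1.mem_acc hsp) hp₂ fun r hr => h₂.1.eq_of_mem hq₂ hr ▸ hqp
  -- `J` takes no new students at `p`: they would be preferred to `s` and vice versa.
  have hsub : projAsg J p ⊆ projAsg M₁ p := by
    intro y hy
    rw [mem_projAsg] at hy ⊢
    by_contra hy₁
    exact ((hJ.rejects_of_notMem_left h₁ h₂.1 hy hy₁).1 s (mem_projAsg.2 hsp)).asymm
      (hR.1 y (mem_projAsg.2 (hJ.mem_right_of_notMem_left hy hy₁)))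
  have hlt : (projAsg J p).card < (projAsg M₁ p).card :=
    Finset.card_lt_card ((Finset.ssubset_iff_of_subset hsub).2
      ⟨s, mem_projAsg.2 hsp, fun hs => hspJ (mem_projAsg.1 hs)⟩)
  rcases hR.2 with hfull | ⟨-, hall⟩
  · exact hJ.not_card_lt_right_of_card_lt_left h₁ h₂ hlt
      (hfull ▸ hlt.trans_le (h₁.1.card_projAsg_le p))
  · obtain ⟨x, hx₂, hx⟩ := hJ.exists_rejected_of_card_lt_left h₁ h₂ hlt
    exact (hx s (mem_lecAsg_of_mem hsp)).asymm (hall x hx₂)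

lemma card_projAsg_lt_of_rejects {s : S} {p : P} (hR : Rejects I M₁ s p)
    (hpc : (projAsg J p).card < I.c p) (hkc : (lecAsg I J (I.lec p)).card < I.d (I.lec p)) :
    (projAsg J p).card < (projAsg M₁ p).card := by
  rcases hR.2 with hfull | ⟨hkfull, -⟩
  · exact hfull ▸ hpc
  · exact absurd (hJ.card_lecAsg_eq_left h₁ h₂ _ ▸ hkfull) hkc.ne

lemma not_lPref_of_rejects {s t : S} {p : P} (hacc : p ∈ I.acc s) (hR₁ : Rejects I M₁ s p)
    (hR₂ : Rejects I M₂ s p) (hpc : (projAsg J p).card < I.c p)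
    (ht : t ∈ lecAsg I M₁ (I.lec p)) : ¬I.lPref (I.lec p) s t := by
  intro hst
  rcases hR₁.2 with hfull₁ | ⟨-, hall₁⟩
  · have hlt₁ : (projAsg J p).card < (projAsg M₁ p).card := hfull₁ ▸ hpc
    obtain ⟨x, hx₂, hx⟩ := hJ.exists_rejected_of_card_lt_left h₁ h₂ hlt₁
    rcases hR₂.2 with hfull₂ | ⟨-, hall₂⟩
    · exact hJ.not_card_lt_right_of_card_lt_left h₁ h₂ hlt₁ (hfull₂ ▸ hpc)
    · exact (hx t ht).2 (I.lTrans _ x s t (h₂.1.isApplicant_of_mem_lecAsg hx₂)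
        ⟨p, hacc, rfl⟩ (h₁.1.isApplicant_of_mem_lecAsg ht) (hall₂ x hx₂).1 hst)
  · exact (hall₁ t ht).2 hst

theorem superStable : I.SuperStable J := by
  refine ⟨hJ.isMatching h₁ h₂, fun s p ⟨hacc, hspJ, hs, hblock⟩ => ?_⟩
  have hs' : ∀ q, (s, q) ∈ M₁ ∪ M₂ → ¬StrictSPref I s q p := fun q hq => by
    obtain ⟨q', hq', hqq'⟩ := hJ.dominates subset_rfl s q hq
    exact not_strictSPref_trans (mem_acc_union h₁.1 h₂.1 hq)
      (mem_acc_union h₁.1 h₂.1 (hJ.subset hq')) hacc hqq' (hs q' hq')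
  have hp₁ : (s, p) ∉ M₁ := fun hsp =>
    let ⟨q, hq⟩ := hJ.exists_mem (s, p) (Finset.mem_union_left _ hsp)
    hs q hq (hJ.strictSPref_of_mem_left h₁ h₂ hsp hspJ hq)
  have hp₂ : (s, p) ∉ M₂ := fun hsp =>
    let ⟨q, hq⟩ := hJ.exists_mem (s, p) (Finset.mem_union_right _ hsp)
    hs q hq (hJ.union_comm.strictSPref_of_mem_left h₂ h₁ hsp hspJ hq)
  have hR₁ := h₁.rejects hacc hp₁ fun q hq => hs' q (Finset.mem_union_left _ hq)
  have hR₂ := h₂.rejects hacc hp₂ fun q hq => hs' q (Finset.mem_union_right _ hq)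
  rcases hblock with ⟨hpc, hkc⟩ | ⟨hpc, -, hweak⟩ | ⟨-, t, ⟨ht, -⟩, hst⟩
  · exact hJ.not_card_lt_right_of_card_lt_left h₁ h₂
      (hJ.card_projAsg_lt_of_rejects h₁ h₂ hR₁ hpc hkc)
      (hJ.union_comm.card_projAsg_lt_of_rejects h₂ h₁ hR₂ hpc hkc)
  · obtain ⟨t, ht, hst⟩ : ∃ t ∈ lecAsg I J (I.lec p), I.lPref (I.lec p) s t := by
      rcases hweak with hsJ | ⟨t, ⟨ht, -⟩, hst⟩
      · exact ⟨s, hsJ, I.lRefl _ s ⟨p, hacc, rfl⟩⟩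
      · exact ⟨t, ht, hst⟩
    obtain ⟨q, hq, hqk⟩ := mem_lecAsg.1 ht
    rcases Finset.mem_union.1 (hJ.subset hq) with hq₁ | hq₂
    · exact hJ.not_lPref_of_rejects h₁ h₂ hacc hR₁ hR₂ hpc
        (mem_lecAsg.2 ⟨q, hq₁, hqk⟩) hst
    · exact hJ.union_comm.not_lPref_of_rejects h₂ h₁ hacc hR₂ hR₁ hpc
        (mem_lecAsg.2 ⟨q, hq₂, hqk⟩) hst
  · rcases Finset.mem_union.1 (hJ.subset (mem_projAsg.1 ht)) with ht₁ | ht₂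
    · exact (hR₁.1 t (mem_projAsg.2 ht₁)).2 hst
    · exact (hR₂.1 t (mem_projAsg.2 ht₂)).2 hst

end IsBestSelection

theorem SuperStable.exists_superStable_dominates {I : SPAST S P L} {M₁ M₂ : Finset (S × P)}
    (h₁ : I.SuperStable M₁) (h₂ : I.SuperStable M₂) :
    ∃ J, I.SuperStable J ∧ Dominates I J M₁ ∧ Dominates I J M₂ :=
  let ⟨J, hJ⟩ := exists_isBestSelection_union h₁.1 h₂.1
  ⟨J, hJ.superStable h₁ h₂, hJ.dominates Finset.subset_union_left,
    hJ.dominates Finset.subset_union_right⟩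

theorem exists_superStable_dominates_all {I : SPAST S P L} (h : ∃ M, I.SuperStable M) :
    ∃ M', I.SuperStable M' ∧ ∀ M, I.SuperStable M → Dominates I M' M := by
  let r : {M // I.SuperStable M} → {M // I.SuperStable M} → Prop :=
    fun M M' => Dominates I M'.1 M.1
  have : IsTrans _ r := ⟨fun A B C hAB hBC => Dominates.trans A.2.1.1 B.2.1.1 C.2.1.1 hAB hBC⟩
  have : Nonempty {M // I.SuperStable M} := let ⟨M, hM⟩ := h; ⟨⟨M, hM⟩⟩
  have hdir : Directed r id := fun A B =>
    let ⟨J, hJ, hA, hB⟩ := A.2.exists_superStable_dominates B.2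
    ⟨⟨J, hJ⟩, hA, hB⟩
  obtain ⟨M', hM'⟩ := hdir.finite_le id
  exact ⟨M'.1, M'.2, fun M hM => hM' ⟨M, hM⟩⟩

end SPAST

open SPAST in
theorem exists_student_optimal_super_stable {S P L : Type} [Fintype S] [Fintype P] [Fintype L]
    [DecidableEq S] [DecidableEq P] [DecidableEq L]
    (I : SPAST S P L) (hss : ∃ M : Finset (S × P), SuperStable I M) :
    ∃ Mopt : Finset (S × P), SuperStable I Mopt ∧
      (∀ M : Finset (S × P), SuperStable I M → ∀ (s : S) (p : P), (s, p) ∈ M →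
        ∃ p' : P, (s, p') ∈ Mopt ∧ ¬(I.sPref s p p' ∧ ¬I.sPref s p' p)) ∧
      (∀ s : S, (∀ p : P, (s, p) ∉ Mopt) →
        ∀ M : Finset (S × P), SuperStable I M → ∀ p : P, (s, p) ∉ M) := by
  obtain ⟨Mopt, hopt, hdom⟩ := exists_superStable_dominates_all hss
  refine ⟨Mopt, hopt, hdom, fun s hs M hM p hp => ?_⟩
  obtain ⟨p', hp', -⟩ := hdom M hM s p hp
  exact hs p' hp'
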